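/- arXiv:1609.07003 — 2 statements merged into one kernel-verified Lean document; each statement's English description precedes it below -/
import Mathlib

section
/- For every real ε, the functions J(q₁,q₂,p₁,p₂) = (1/2)(q₁²+p₁²) − (q₂²+p₂²) and H(q₁,q₂,p₁,p₂) = 2q₁p₁q₂ + (q₁²−p₁²)p₂ + εR(q,p)², where R(q,p) = (1/2)(q₁²+p₁²) + (q₂²+p₂²), Poisson commute: at every point of ℝ⁴ one has (∂J/∂q₁)(∂H/∂p₁) + (∂J/∂q₂)(∂H/∂p₂) − (∂J/∂p₁)(∂H/∂q₁) − (∂J/∂p₂)(∂H/∂q₂) = 0, the partial derivatives being directional (Fréchet) derivatives of these polynomial functions on ℝ⁴. -/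
/-!
Both `J` and `R` are functions of the actions `(q₁² + p₁²)/2` and `(q₂² + p₂²)/2`, so they
Poisson commute, and by the Leibniz rule `J` commutes with `R²`. The cubic part of `H` is
`Im ((q₁ + i p₁)² (q₂ + i p₂))`, which the flow of `J` leaves invariant because it rotates the
two planes with frequencies `1` and `−2`. Once the gradients are computed, the bracket vanishes
as a polynomial identity.
-/

noncomputable section

/-- The momentum `J` of the 1:(−2) resonant system, in coordinates `(q₁, q₂, p₁, p₂)`. -/
def J12 (x : ℝ × ℝ × ℝ × ℝ) : ℝ :=
  (1 / 2) * (x.1 ^ 2 + x.2.2.1 ^ 2) - (x.2.1 ^ 2 + x.2.2.2 ^ 2)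

/-- The 1:2 oscillator `R`, in coordinates `(q₁, q₂, p₁, p₂)`. -/
def R12 (x : ℝ × ℝ × ℝ × ℝ) : ℝ :=
  (1 / 2) * (x.1 ^ 2 + x.2.2.1 ^ 2) + (x.2.1 ^ 2 + x.2.2.2 ^ 2)

/-- The energy `H` of the 1:(−2) resonant system, in coordinates `(q₁, q₂, p₁, p₂)`. -/
def H12 (ε : ℝ) (x : ℝ × ℝ × ℝ × ℝ) : ℝ :=
  2 * x.1 * x.2.2.1 * x.2.1 + (x.1 ^ 2 - x.2.2.1 ^ 2) * x.2.2.2 + ε * (R12 x) ^ 2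

section Gradients

variable (x v : ℝ × ℝ × ℝ × ℝ)

lemma fderiv_J12_apply :
    fderiv ℝ J12 x v = x.1 * v.1 + x.2.2.1 * v.2.2.1 - 2 * (x.2.1 * v.2.1 + x.2.2.2 * v.2.2.2) := by
  have hx := hasFDerivAt_id (𝕜 := ℝ) x
  have h : HasFDerivAt J12 _ x :=
    ((hx.fst.pow 2).add (hx.snd.snd.fst.pow 2)).const_mul (1 / 2 : ℝ) |>.sub
      ((hx.snd.fst.pow 2).add (hx.snd.snd.snd.pow 2))
  rw [h.fderiv]
  simp only [id_eq, Nat.add_one_sub_one, pow_one, nsmul_eq_mul, Nat.cast_ofNat,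
    ContinuousLinearMap.comp_id, sub_apply, add_apply, smul_apply, smul_eq_mul,
    ContinuousLinearMap.comp_apply, ContinuousLinearMap.coe_fst', ContinuousLinearMap.coe_snd']
  ring

lemma fderiv_R12_apply :
    fderiv ℝ R12 x v = x.1 * v.1 + x.2.2.1 * v.2.2.1 + 2 * (x.2.1 * v.2.1 + x.2.2.2 * v.2.2.2) := by
  have hx := hasFDerivAt_id (𝕜 := ℝ) x
  have h : HasFDerivAt R12 _ x :=
    ((hx.fst.pow 2).add (hx.snd.snd.fst.pow 2)).const_mul (1 / 2 : ℝ) |>.add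
      ((hx.snd.fst.pow 2).add (hx.snd.snd.snd.pow 2))
  rw [h.fderiv]
  simp only [id_eq, Nat.add_one_sub_one, pow_one, nsmul_eq_mul, Nat.cast_ofNat,
    ContinuousLinearMap.comp_id, add_apply, smul_apply, smul_eq_mul,
    ContinuousLinearMap.comp_apply, ContinuousLinearMap.coe_fst', ContinuousLinearMap.coe_snd']
  ring

lemma fderiv_H12_apply (ε : ℝ) :
    fderiv ℝ (H12 ε) x v =
      2 * (x.2.2.1 * x.2.1 + x.1 * x.2.2.2) * v.1 + 2 * x.1 * x.2.2.1 * v.2.1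
        + 2 * (x.1 * x.2.1 - x.2.2.1 * x.2.2.2) * v.2.2.1 + (x.1 ^ 2 - x.2.2.1 ^ 2) * v.2.2.2
        + 2 * ε * R12 x * fderiv ℝ R12 x v := by
  have hx := hasFDerivAt_id (𝕜 := ℝ) x
  have hR : HasFDerivAt R12 (fderiv ℝ R12 x) x :=
    (by unfold R12; fun_prop : DifferentiableAt ℝ R12 x).hasFDerivAt
  have h : HasFDerivAt (H12 ε) _ x :=
    ((((hx.fst.const_mul 2).mul hx.snd.snd.fst).mul hx.snd.fst).add
      (((hx.fst.pow 2).sub (hx.snd.snd.fst.pow 2)).mul hx.snd.snd.snd)).add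
      ((hR.pow 2).const_mul ε)
  rw [h.fderiv]
  simp only [id_eq, Pi.mul_apply, Pi.sub_apply, Nat.add_one_sub_one, pow_one, nsmul_eq_mul,
    Nat.cast_ofNat, ContinuousLinearMap.comp_id, sub_apply, add_apply, smul_apply, smul_eq_mul,
    ContinuousLinearMap.comp_apply, ContinuousLinearMap.coe_fst', ContinuousLinearMap.coe_snd']
  ring

end Gradients

/-- The functions `J` and `H` of the 1:(−2) resonant system Poisson commute:
`{J, H} = ∂J/∂q₁ ∂H/∂p₁ + ∂J/∂q₂ ∂H/∂p₂ − ∂J/∂p₁ ∂H/∂q₁ − ∂J/∂p₂ ∂H/∂q₂ = 0`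
at every point of `ℝ⁴`, the partial derivatives being directional (Fréchet) derivatives. -/
theorem poisson_commute_one_minus_two (ε : ℝ) (x : ℝ × ℝ × ℝ × ℝ) :
    fderiv ℝ J12 x (1, 0, 0, 0) * fderiv ℝ (H12 ε) x (0, 0, 1, 0)
      + fderiv ℝ J12 x (0, 1, 0, 0) * fderiv ℝ (H12 ε) x (0, 0, 0, 1)
      - fderiv ℝ J12 x (0, 0, 1, 0) * fderiv ℝ (H12 ε) x (1, 0, 0, 0)
      - fderiv ℝ J12 x (0, 0, 0, 1) * fderiv ℝ (H12 ε) x (0, 1, 0, 0) = 0 := by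
  simp only [fderiv_J12_apply, fderiv_H12_apply, fderiv_R12_apply]
  ring
end
end

section
/- Let H : ℝ³×ℝ³ → ℝ be defined by H(x,y) = Re((x₂+ix₃)²·(y₂−iy₃)). Then for all x,y ∈ ℝ³: x₃·(∂H/∂x₂)(x,y) − x₂·(∂H/∂x₃)(x,y) + 2(y₃·(∂H/∂y₂)(x,y) − y₂·(∂H/∂y₃)(x,y)) = 0, the partial derivatives being directional (Fréchet) derivatives. (This says that J(x,y) = x₁ + 2y₁ and H Poisson commute with respect to the product Lie–Poisson bracket on so(3)*×so(3)*, since ∇ₓJ = e₁ and ∇_yJ = 2e₁, and {f,g}(x,y) = ⟨x, ∇ₓf × ∇ₓg⟩ + ⟨y, ∇_yf × ∇_yg⟩.) -/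
/-!
In the complex coordinates `z = x₂ + i x₃`, `w = y₂ + i y₃` the energy is `H = Re (z² w̄)`.
The Lie–Poisson Hamiltonian field of `J = x₁ + 2y₁` is `(x × e₁, y × 2e₁)`, which acts
infinitesimally by `z ↦ -i z` and `w̄ ↦ 2i w̄`; the weights of `z²` and `w̄` cancel, so the
derivative of `z² w̄` along this field vanishes, and the left-hand side is exactly that derivative.
-/

noncomputable section

/-- The energy `H(x,y) = Re((x₂+ix₃)²·(y₂−iy₃))` on `ℝ³ × ℝ³` (0-based indices, so
`x₂ = x 1`, `x₃ = x 2`, etc.). -/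
def Hs2 (v : (Fin 3 → ℝ) × (Fin 3 → ℝ)) : ℝ :=
  ((((v.1 1 : ℂ) + Complex.I * (v.1 2 : ℂ)) ^ 2)
    * ((v.2 1 : ℂ) - Complex.I * (v.2 2 : ℂ))).re

open Complex
open scoped Matrix

theorem fderiv_re_sq_mul_apply {E : Type*} [NormedAddCommGroup E] [NormedSpace ℝ E]
    (z w : E →L[ℝ] ℂ) (p u : E) :
    fderiv ℝ (fun v => (z v ^ 2 * w v).re) p u = (2 * z p * z u * w p + z p ^ 2 * w u).re := by
  have h : HasFDerivAt (fun v => (z v ^ 2 * w v).re) _ p :=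
    reCLM.hasFDerivAt.comp p ((z.hasFDerivAt.pow 2).mul w.hasFDerivAt)
  rw [h.fderiv]
  simp only [ContinuousLinearMap.comp_apply, reCLM_apply, add_apply,
    smul_apply, smul_eq_mul, nsmul_eq_mul]
  congr 1
  ring

theorem fderiv_re_sq_mul_eq_zero {E : Type*} [NormedAddCommGroup E] [NormedSpace ℝ E]
    (z w : E →L[ℝ] ℂ) {p u : E} (c : ℂ) (hz : z u = c * z p) (hw : w u = -(2 * c) * w p) :
    fderiv ℝ (fun v => (z v ^ 2 * w v).re) p u = 0 := by
  have : 2 * z p * (c * z p) * w p + z p ^ 2 * (-(2 * c) * w p) = 0 := by ring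
  rw [fderiv_re_sq_mul_apply, hz, hw, this, zero_re]

def planeCoord : (Fin 3 → ℝ) →L[ℝ] ℂ :=
  ofRealCLM ∘L .proj 1 + I • ofRealCLM ∘L .proj 2

@[simp] theorem planeCoord_apply (x : Fin 3 → ℝ) : planeCoord x = x 1 + I * x 2 := by
  simp [planeCoord]

theorem planeCoord_cross_single_zero (x : Fin 3 → ℝ) (a : ℝ) :
    planeCoord (x ⨯₃ Pi.single 0 a) = -(a * I) * planeCoord x := by
  have h1 : (x ⨯₃ Pi.single 0 a) 1 = x 2 * a := by simp [cross_apply]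
  have h2 : (x ⨯₃ Pi.single 0 a) 2 = -(x 1 * a) := by simp [cross_apply]
  rw [planeCoord_apply, planeCoord_apply, h1, h2]
  push_cast
  linear_combination (a * x 2 : ℂ) * I_sq

theorem Hs2_eq_re_sq_mul : Hs2 = fun v =>
    ((planeCoord ∘L .fst ℝ _ _) v ^ 2
      * (conjCLE.toContinuousLinearMap ∘L planeCoord ∘L .snd ℝ _ _) v).re := by
  funext v
  simp [Hs2]

theorem fderiv_Hs2_cross_single_zero (x y : Fin 3 → ℝ) :
    fderiv ℝ Hs2 (x, y) (x ⨯₃ Pi.single 0 1, y ⨯₃ Pi.single 0 2) = 0 := by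
  rw [Hs2_eq_re_sq_mul]
  refine fderiv_re_sq_mul_eq_zero _ _ (-I) ?_ ?_
  · simp only [ContinuousLinearMap.comp_apply, ContinuousLinearMap.coe_fst',
      planeCoord_cross_single_zero, ofReal_one, one_mul]
  · simp only [ContinuousLinearMap.comp_apply, ContinuousLinearMap.coe_snd',
      planeCoord_cross_single_zero, ContinuousLinearEquiv.coe_coe, conjCLE_apply, map_mul,
      map_neg, conj_ofReal, conj_I]
    push_cast
    ring

/-- `x₃·∂H/∂x₂ − x₂·∂H/∂x₃ + 2(y₃·∂H/∂y₂ − y₂·∂H/∂y₃) = 0` for all `x, y ∈ ℝ³`,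
the partial derivatives being directional (Fréchet) derivatives; i.e. `J = x₁ + 2y₁`
and `H` Poisson commute for the product Lie–Poisson bracket on `so(3)* × so(3)*`. -/
theorem lie_poisson_commute_s2s2 (x y : Fin 3 → ℝ) :
    x 2 * fderiv ℝ Hs2 (x, y) (Pi.single 1 1, 0)
      - x 1 * fderiv ℝ Hs2 (x, y) (Pi.single 2 1, 0)
      + 2 * (y 2 * fderiv ℝ Hs2 (x, y) (0, Pi.single 1 1)
          - y 1 * fderiv ℝ Hs2 (x, y) (0, Pi.single 2 1)) = 0 := by
  have hField : ((x ⨯₃ Pi.single 0 1, y ⨯₃ Pi.single 0 2) : (Fin 3 → ℝ) × (Fin 3 → ℝ)) =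
      x 2 • (Pi.single 1 1, 0) - x 1 • (Pi.single 2 1, 0)
        + (2 : ℝ) • (y 2 • (0, Pi.single 1 1) - y 1 • (0, Pi.single 2 1)) := by
    ext i <;> fin_cases i <;> simp [cross_apply, mul_comm]
  have h := fderiv_Hs2_cross_single_zero x y
  rw [hField] at h
  simpa only [map_add, map_sub, map_smul, smul_eq_mul] using h
end
end
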